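/- For any s > 2, there exist constants K > 0 and C > 0 depending only on s such that for all ξ, ξ_* ≥ 1: -ξ^s - ξ_*^s + (s/2) ξ² ξ_*^{s-2} + (s/2) ξ_*² ξ^{s-2} ≤ -K ξ^s + C(ξ ξ_*^{s-1} + ξ_* ξ^{s-1}). -/
import Mathlib


/-- for s > 2 there are K, C > 0 depending only on s such that for all
ξ, ξ_* ≥ 1: -ξ^s - ξ_*^s + (s/2)ξ²ξ_*^{s-2} + (s/2)ξ_*²ξ^{s-2} ≤ -Kξ^s + C(ξξ_*^{s-1} + ξ_*ξ^{s-1}). -/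
theorem moment_elementary_inequality (s : ℝ) (hs : 2 < s) :
    ∃ K > (0 : ℝ), ∃ C > (0 : ℝ), ∀ ξ ξs : ℝ, 1 ≤ ξ → 1 ≤ ξs →
      -ξ ^ s - ξs ^ s + (s / 2) * ξ ^ (2 : ℝ) * ξs ^ (s - 2)
          + (s / 2) * ξs ^ (2 : ℝ) * ξ ^ (s - 2)
        ≤ -K * ξ ^ s + C * (ξ * ξs ^ (s - 1) + ξs * ξ ^ (s - 1)) := by
  have hs2 : (0:ℝ) < s - 2 := by linarith
  have hspos : (0:ℝ) < s := by linarith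
  set δ : ℝ := (1/(2*s)) ^ ((s-2)⁻¹) with hδdef
  have hδpos : 0 < δ := Real.rpow_pos_of_pos (by positivity) _
  have hδpow : δ ^ (s-2) = 1/(2*s) := by
    rw [hδdef, ← Real.rpow_mul (by positivity), inv_mul_cancel₀ (ne_of_gt hs2),
      Real.rpow_one]
  set C : ℝ := s/(2*δ) with hCdef
  have hCpos : 0 < C := by positivity
  refine ⟨3/4, by norm_num, C, hCpos, ?_⟩
  intro ξ ξs hξ hξs
  have key : ∀ a b : ℝ, 1 ≤ a → 1 ≤ b →
      (s/2) * a^(2:ℝ) * b^(s-2) ≤ (1/4)*a^s + C * (a * b^(s-1)) := by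
    intro a b ha hb
    have ha0 : (0:ℝ) < a := by linarith
    have hb0 : (0:ℝ) < b := by linarith
    have hbs1 : b^(s-1) = b * b^(s-2) := by
      rw [show s - 1 = 1 + (s-2) by ring, Real.rpow_add hb0, Real.rpow_one]
    have has1 : a^(s-1) = a * a^(s-2) := by
      rw [show s - 1 = 1 + (s-2) by ring, Real.rpow_add ha0, Real.rpow_one]
    have has : a^s = a * a^(s-1) := by
      nth_rewrite 1 [show s = 1 + (s-1) by ring]
      rw [Real.rpow_add ha0, Real.rpow_one]
    have ha2 : a^(2:ℝ) = a * a := by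
      rw [show (2:ℝ) = 1 + 1 by norm_num, Real.rpow_add ha0, Real.rpow_one]
    have key1 : (s/2) * (a * b^(s-2)) ≤ (1/4)*a^(s-1) + C * b^(s-1) := by
      have hbs1nn : 0 ≤ b^(s-1) := (Real.rpow_pos_of_pos hb0 _).le
      have has1nn : 0 ≤ a^(s-1) := (Real.rpow_pos_of_pos ha0 _).le
      rcases le_total b (δ * a) with h | h
      · have hb2 : b^(s-2) ≤ δ^(s-2) * a^(s-2) := by
          calc b^(s-2) ≤ (δ*a)^(s-2) := Real.rpow_le_rpow hb0.le h hs2.le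
            _ = δ^(s-2) * a^(s-2) := Real.mul_rpow hδpos.le ha0.le
        have h1 : (s/2) * (a * b^(s-2)) ≤ (s/2) * (a * (δ^(s-2) * a^(s-2))) := by
          have := mul_le_mul_of_nonneg_left hb2 ha0.le
          nlinarith
        have h2 : (s/2) * (a * (δ^(s-2) * a^(s-2))) = (1/4)*a^(s-1) := by
          rw [hδpow, has1]
          field_simp
          ring
        nlinarith
      · have haleb : a ≤ b / δ := by
          rw [le_div_iff₀ hδpos]; linarith [h]
        have h1 : (s/2) * (a * b^(s-2)) ≤ (s/2) * ((b/δ) * b^(s-2)) := by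
          have hbnn : 0 ≤ b^(s-2) := (Real.rpow_pos_of_pos hb0 _).le
          have := mul_le_mul_of_nonneg_right haleb hbnn
          nlinarith
        have h2 : (s/2) * ((b/δ) * b^(s-2)) = C * b^(s-1) := by
          rw [hbs1, hCdef]
          field_simp
        nlinarith
    calc (s/2) * a^(2:ℝ) * b^(s-2) = a * ((s/2) * (a * b^(s-2))) := by
          rw [ha2]; ring
      _ ≤ a * ((1/4)*a^(s-1) + C * b^(s-1)) :=
          mul_le_mul_of_nonneg_left key1 ha0.le
      _ = (1/4)*a^s + C * (a * b^(s-1)) := by rw [has]; ring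
  have k1 := key ξ ξs hξ hξs
  have k2 := key ξs ξ hξs hξ
  have hξs_s : 0 ≤ ξs ^ s := (Real.rpow_pos_of_pos (by linarith) s).le
  linarith
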